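/- arXiv:2107.01958 — 2 statements merged into one kernel-verified Lean document; each statement's English description precedes it below -/
import Mathlib

section
/- Let H be a complex Hilbert space, φ : H → H bounded and invertible, and (P, D(P)) a densely defined closable operator. Let P^φ = φ P* φ⁻¹ be the left φ-adjoint and, for a densely defined operator Q, let Q^{tφ} = (φ*) Q* (φ*)⁻¹ be the right φ-adjoint. Then (P^φ)^{tφ} equals the closure of P; in particular if P is closed then (P^φ)^{tφ} = P. -/
/-- The conjugate `φ T φ⁻¹` of a partially defined operator `T` by a bounded invertible map `φ`,
with domain `φ D(T)`. -/
noncomputable def conjPMap {H : Type*} [NormedAddCommGroup H] [InnerProductSpace ℂ H]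
    (φ : H ≃L[ℂ] H) (T : H →ₗ.[ℂ] H) : H →ₗ.[ℂ] H where
  domain := T.domain.map (φ.toLinearEquiv : H →ₗ[ℂ] H)
  toFun := ((φ.toLinearEquiv : H →ₗ[ℂ] H).comp T.toFun).comp
    (φ.toLinearEquiv.submoduleMap T.domain).symm.toLinearMap

/-!
Conjugation commutes with adjoints once `φ` is replaced by `(φ*)⁻¹`: comparing graphs,
`(φ T φ⁻¹)* = (φ*)⁻¹ T* φ*`. Hence `(P^φ)^{tφ} = φ* (φ*)⁻¹ P** φ* (φ*)⁻¹ = P**`. The graph of an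
adjoint is the rotated orthogonal complement of the graph in `H ⊕ H`, so the graph of `P**` is the
double orthogonal complement of the graph of `P`, i.e. its closure, which is the graph of `P̄`.
The same computation shows that `D(P*)` is dense when `P` is closable, as needed for `P**`.
-/

open LinearPMap WithLp

namespace Submodule

variable {𝕜 E F : Type*} [RCLike 𝕜] [NormedAddCommGroup E] [InnerProductSpace 𝕜 E]
  [NormedAddCommGroup F] [InnerProductSpace 𝕜 F]

theorem mem_adjoint_iff_toLp_mem_orthogonal (g : Submodule 𝕜 (E × F)) (x : F × E) :
    x ∈ g.adjoint ↔
      toLp 2 (-x.2, x.1) ∈ (g.comap (WithLp.linearEquiv 2 𝕜 (E × F)).toLinearMap)ᗮ := by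
  simp only [mem_adjoint_iff, mem_orthogonal, mem_comap, LinearEquiv.coe_coe,
    WithLp.linearEquiv_apply, prod_inner_apply, inner_neg_right, neg_add_eq_sub]
  exact ⟨fun h v hv ↦ h _ _ hv, fun h a b hab ↦ h (toLp 2 (a, b)) hab⟩

theorem toLp_mem_topologicalClosure_comap_iff (g : Submodule 𝕜 (E × F)) (x : E × F) :
    toLp 2 x ∈ (g.comap (WithLp.linearEquiv 2 𝕜 (E × F)).toLinearMap).topologicalClosure ↔
      x ∈ g.topologicalClosure := by
  let e := (WithLp.prodContinuousLinearEquiv 2 𝕜 E F).toHomeomorph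
  change toLp 2 x ∈ _root_.closure (e ⁻¹' g) ↔ x ∈ _root_.closure (g : Set (E × F))
  rw [← e.preimage_closure]
  rfl

variable [CompleteSpace E] [CompleteSpace F]

theorem adjoint_adjoint (g : Submodule 𝕜 (E × F)) :
    g.adjoint.adjoint = g.topologicalClosure := by
  ext x
  rw [← toLp_mem_topologicalClosure_comap_iff, ← orthogonal_orthogonal_eq_closure,
    mem_orthogonal, mem_adjoint_iff]
  constructor
  · rintro h ⟨a, b⟩ hab
    have hmem : (b, -a) ∈ g.adjoint := by
      rwa [mem_adjoint_iff_toLp_mem_orthogonal, neg_neg]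
    have := h _ _ hmem
    rw [inner_neg_left] at this
    simp only [prod_inner_apply]
    linear_combination -this
  · intro h a b hab
    have := h _ ((mem_adjoint_iff_toLp_mem_orthogonal g (a, b)).1 hab)
    simp only [prod_inner_apply, inner_neg_left] at this
    linear_combination -this

end Submodule

namespace LinearPMap

theorem IsClosed.closure_eq {R E F : Type*} [CommRing R] [AddCommGroup E] [AddCommGroup F]
    [Module R E] [Module R F] [TopologicalSpace E] [TopologicalSpace F] [ContinuousAdd E]
    [ContinuousAdd F] [TopologicalSpace R] [ContinuousSMul R E] [ContinuousSMul R F]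
    {T : E →ₗ.[R] F} (hT : T.IsClosed) : T.closure = T :=
  eq_of_eq_graph <| by
    rw [← hT.isClosable.graph_closure_eq_closure_graph, hT.submodule_topologicalClosure_eq]

variable {𝕜 E F : Type*} [RCLike 𝕜] [NormedAddCommGroup E] [InnerProductSpace 𝕜 E]
  [NormedAddCommGroup F] [InnerProductSpace 𝕜 F] [CompleteSpace E] [CompleteSpace F]
  {T : E →ₗ.[𝕜] F}

theorem dense_adjoint_domain (hT : Dense (T.domain : Set E)) (hTc : T.IsClosable) :
    Dense (T†.domain : Set F) := by
  rw [Submodule.dense_iff_topologicalClosure_eq_top, Submodule.topologicalClosure_eq_top_iff,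
    Submodule.eq_bot_iff]
  intro v hv
  have hmem : (0, v) ∈ T.graph.adjoint.adjoint := by
    rw [Submodule.mem_adjoint_iff]
    rintro a b hab
    rw [← adjoint_graph_eq_graph_adjoint hT] at hab
    simp [(Submodule.mem_orthogonal _ _).1 hv a (mem_domain_of_mem_graph hab)]
  rw [Submodule.adjoint_adjoint, hTc.graph_closure_eq_closure_graph] at hmem
  exact T.closure.graph_fst_eq_zero_snd hmem rfl

theorem adjoint_adjoint_eq_closure (hT : Dense (T.domain : Set E)) (hTc : T.IsClosable) :
    T†† = T.closure :=
  eq_of_eq_graph <| by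
    rw [adjoint_graph_eq_graph_adjoint (dense_adjoint_domain hT hTc),
      adjoint_graph_eq_graph_adjoint hT, Submodule.adjoint_adjoint,
      hTc.graph_closure_eq_closure_graph]

end LinearPMap

section conjPMap

variable {H : Type*} [NormedAddCommGroup H] [InnerProductSpace ℂ H]

theorem conjPMap_apply (φ : H ≃L[ℂ] H) (T : H →ₗ.[ℂ] H) (u : T.domain)
    (h : φ u ∈ (conjPMap φ T).domain) : conjPMap φ T ⟨φ u, h⟩ = φ (T u) := by
  have : (φ.toLinearEquiv.submoduleMap T.domain).symm ⟨φ u, h⟩ = u :=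
    (LinearEquiv.symm_apply_eq _).2 rfl
  exact congrArg (φ ∘ T) this

theorem mem_graph_conjPMap_iff (φ : H ≃L[ℂ] H) (T : H →ₗ.[ℂ] H) (a b : H) :
    (a, b) ∈ (conjPMap φ T).graph ↔ (φ.symm a, φ.symm b) ∈ T.graph := by
  simp only [mem_graph_iff]
  constructor
  · rintro ⟨⟨_, u, hu, rfl⟩, rfl, rfl⟩
    exact ⟨⟨u, hu⟩, by simp, by simp [conjPMap_apply φ T ⟨u, hu⟩]⟩
  · rintro ⟨u, hu, hTu⟩
    refine ⟨⟨φ u, u, u.2, rfl⟩, by simp [hu], ?_⟩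
    exact (conjPMap_apply φ T u _).trans (by rw [hTu, ContinuousLinearEquiv.apply_symm_apply])

theorem dense_conjPMap_domain (φ : H ≃L[ℂ] H) {T : H →ₗ.[ℂ] H}
    (hT : Dense (T.domain : Set H)) : Dense ((conjPMap φ T).domain : Set H) := by
  have : ((conjPMap φ T).domain : Set H) = φ '' T.domain := Submodule.map_coe _ _
  rw [this]
  exact φ.surjective.denseRange.dense_image φ.continuous hT

theorem conjPMap_conjPMap_symm (ψ : H ≃L[ℂ] H) (S : H →ₗ.[ℂ] H) :
    conjPMap ψ (conjPMap ψ.symm S) = S :=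
  eq_of_eq_graph <| by
    ext ⟨a, b⟩
    simp only [mem_graph_conjPMap_iff, ContinuousLinearEquiv.symm_symm,
      ContinuousLinearEquiv.apply_symm_apply]

variable [CompleteSpace H]

theorem adjoint_conjPMap {φ φstar : H ≃L[ℂ] H}
    (hstar : ∀ x y : H, (inner ℂ (φstar x) y : ℂ) = (inner ℂ x (φ y) : ℂ))
    {T : H →ₗ.[ℂ] H} (hT : Dense (T.domain : Set H)) :
    (conjPMap φ T)† = conjPMap φstar.symm T† := by
  have hstar' (x y : H) : (inner ℂ x (φstar y) : ℂ) = inner ℂ (φ x) y := by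
    rw [← inner_conj_symm, hstar, inner_conj_symm]
  refine eq_of_eq_graph ?_
  ext ⟨c, d⟩
  rw [adjoint_graph_eq_graph_adjoint (dense_conjPMap_domain φ hT), mem_graph_conjPMap_iff,
    ContinuousLinearEquiv.symm_symm, adjoint_graph_eq_graph_adjoint hT,
    Submodule.mem_adjoint_iff, Submodule.mem_adjoint_iff]
  constructor
  · intro h a b hab
    rw [hstar', hstar']
    exact h (φ a) (φ b) (by simpa only [mem_graph_conjPMap_iff, φ.symm_apply_apply])
  · intro h a b hab
    rw [mem_graph_conjPMap_iff] at hab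
    simpa only [hstar', φ.apply_symm_apply] using h _ _ hab

end conjPMap

/-- for a densely defined closable `P`, with `P^φ = φ P* φ⁻¹` (left `φ`-adjoint) and
`Q^{tφ} = φ* Q* (φ*)⁻¹` (right `φ`-adjoint), one has `(P^φ)^{tφ} = P̄`, the closure of `P`;
in particular `(P^φ)^{tφ} = P` when `P` is closed. -/
theorem stmt_4 (H : Type*) [NormedAddCommGroup H] [InnerProductSpace ℂ H] [CompleteSpace H]
    (P : H →ₗ.[ℂ] H) (hP : Dense (P.domain : Set H)) (hPc : P.IsClosable)
    (φ φstar : H ≃L[ℂ] H)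
    (hstar : ∀ x y : H, (inner ℂ (φstar x) y : ℂ) = (inner ℂ x (φ y) : ℂ)) :
    conjPMap φstar ((conjPMap φ P.adjoint).adjoint) = P.closure ∧
    (P.IsClosed → conjPMap φstar ((conjPMap φ P.adjoint).adjoint) = P) := by
  have h : conjPMap φstar (conjPMap φ P†)† = P.closure := by
    rw [adjoint_conjPMap hstar (dense_adjoint_domain hP hPc), conjPMap_conjPMap_symm,
      adjoint_adjoint_eq_closure hP hPc]
  exact ⟨h, fun hcl ↦ h.trans hcl.closure_eq⟩
end

section
/- Let (B, D(B)) be a closed densely defined operator on a Hilbert space H with compact resolvent, such that C + B is maximal accretive for some C. Suppose there is a sesquilinear hermitian form 𝔥 on a dense subspace 𝒟 ⊂ D(B), continuous on a weighted space W continuously embedded in H, satisfying 𝔥(Bs, s') = 𝔥(s, Bs') for s, s' ∈ W ∩ D(B), with every eigenfunction of B lying in W, and such that for every 0 ≠ u ∈ W there exists v with 𝔥(u,v) ≠ 0 (𝔥 nondegenerate on W × H-directions). Then Spec(B) is invariant under complex conjugation: λ ∈ Spec(B) ⟹ λ̄ ∈ Spec(B). -/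
/-! If `B s = λ s` with `s ∈ W`, formal self-adjointness gives
`𝔥 s (B x) = 𝔥 (B s) x = conj λ * 𝔥 s x`, so `s` is `𝔥`-orthogonal to the range of `B - conj λ`.
Nondegeneracy of `𝔥` at `s` then shows that `B - conj λ` is not surjective. -/

open ComplexConjugate

section PTSymmetry

variable {H : Type*} [AddCommGroup H] [Module ℂ H] {B : H →ₗ.[ℂ] H} {𝔥 : H → H → ℂ}

theorem form_eigenvector_apply_sub_conj_smul_eq_zero
    (hadd₂ : ∀ u v w : H, 𝔥 u (v + w) = 𝔥 u v + 𝔥 u w)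
    (hsmul₁ : ∀ (c : ℂ) (u w : H), 𝔥 (c • u) w = conj c * 𝔥 u w)
    (hsmul₂ : ∀ (c : ℂ) (u w : H), 𝔥 u (c • w) = c * 𝔥 u w)
    {s : B.domain} {lam : ℂ} (hs : B s = lam • (s : H))
    (hsym : ∀ y : B.domain, 𝔥 (B s) y = 𝔥 s (B y)) (y : B.domain) :
    𝔥 s (B y - conj lam • (y : H)) = 0 := by
  have hsub : 𝔥 s (B y - conj lam • (y : H)) = 𝔥 s (B y) - 𝔥 s (conj lam • (y : H)) :=
    map_sub (AddMonoidHom.mk' (𝔥 s) (hadd₂ s)) _ _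
  rw [hsub, ← hsym y, hs, hsmul₁, hsmul₂, sub_self]

theorem not_surjective_sub_conj_smul_of_eigenvector
    (hadd₂ : ∀ u v w : H, 𝔥 u (v + w) = 𝔥 u v + 𝔥 u w)
    (hsmul₁ : ∀ (c : ℂ) (u w : H), 𝔥 (c • u) w = conj c * 𝔥 u w)
    (hsmul₂ : ∀ (c : ℂ) (u w : H), 𝔥 u (c • w) = c * 𝔥 u w)
    {s : B.domain} {lam : ℂ} (hs : B s = lam • (s : H))
    (hsym : ∀ y : B.domain, 𝔥 (B s) y = 𝔥 s (B y)) (hnd : ∃ v : H, 𝔥 s v ≠ 0) :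
    ¬ Function.Surjective fun x : B.domain => B x - conj lam • (x : H) := by
  intro hsurj
  obtain ⟨v, hv⟩ := hnd
  obtain ⟨x, rfl⟩ := hsurj v
  exact hv (form_eigenvector_apply_sub_conj_smul_eq_zero hadd₂ hsmul₁ hsmul₂ hs hsym x)

end PTSymmetry

theorem stmt_15_general (H : Type*) [NormedAddCommGroup H] [InnerProductSpace ℂ H]
    (B : H →ₗ.[ℂ] H)
    (hfred : ∀ z : ℂ, (∃ x : B.domain, (x : H) ≠ 0 ∧ B x = z • (x : H)) ∨
      Function.Bijective fun x : B.domain => B x - z • (x : H))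
    (W : Submodule ℂ H)
    (𝔥 : H → H → ℂ)
    (hsmul₁ : ∀ (c : ℂ) (u w : H), 𝔥 (c • u) w = starRingEnd ℂ c * 𝔥 u w)
    (hadd₂ : ∀ u v w : H, 𝔥 u (v + w) = 𝔥 u v + 𝔥 u w)
    (hsmul₂ : ∀ (c : ℂ) (u w : H), 𝔥 u (c • w) = c * 𝔥 u w)
    (heig : ∀ (z : ℂ) (x : B.domain), B x = z • (x : H) → (x : H) ∈ W)
    (hsa : ∀ x y : B.domain, (x : H) ∈ W → B x ∈ W →
      𝔥 (B x) ((y : H)) = 𝔥 ((x : H)) (B y))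
    (hnd : ∀ u : H, u ∈ W → u ≠ 0 → ∃ v : H, 𝔥 u v ≠ 0) :
    ∀ lam : ℂ, ¬ Function.Bijective (fun x : B.domain => B x - lam • (x : H)) →
      ¬ Function.Bijective (fun x : B.domain => B x - (starRingEnd ℂ lam) • (x : H)) := by
  intro lam hnotbij hbij
  obtain ⟨s, hs0, hs⟩ := (hfred lam).resolve_right hnotbij
  have hsW : (s : H) ∈ W := heig lam s hs
  have hBsW : B s ∈ W := hs ▸ W.smul_mem lam hsW
  exact not_surjective_sub_conj_smul_of_eigenvector hadd₂ hsmul₁ hsmul₂ hs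
    (hsa s · hsW hBsW) (hnd s hsW hs0) hbij.surjective

/-- abstract PT-symmetry: let `B` be closed, densely defined, with compact
resolvent (so that `B - z` is Fredholm of index `0`: either it has an eigenvector or it is
bijective) and `C + B` maximal accretive.  Given a hermitian sesquilinear form `𝔥`, defined on a
subspace `W` containing all eigenfunctions of `B`, with respect to which `B` is formally
self-adjoint and which is nondegenerate on `W`, the spectrum of `B` is invariant under complex
conjugation. -/
theorem stmt_15 (H : Type*) [NormedAddCommGroup H] [InnerProductSpace ℂ H] [CompleteSpace H]
    (B : H →ₗ.[ℂ] H)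
    (hdense : Dense (B.domain : Set H))
    (hclosed : IsClosed (B.graph : Set (H × H)))
    (C : ℝ)
    (haccr : ∀ x : B.domain, 0 ≤ (inner ℂ ((x : H)) (B x + (C : ℂ) • (x : H)) : ℂ).re)
    (hsurj : ∀ y : H, ∃ x : B.domain, B x + ((C : ℂ) + 1) • (x : H) = y)
    (hfred : ∀ z : ℂ, (∃ x : B.domain, (x : H) ≠ 0 ∧ B x = z • (x : H)) ∨
      Function.Bijective fun x : B.domain => B x - z • (x : H))
    (W : Submodule ℂ H)
    (𝔥 : H → H → ℂ)
    (hadd₁ : ∀ u v w : H, 𝔥 (u + v) w = 𝔥 u w + 𝔥 v w)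
    (hsmul₁ : ∀ (c : ℂ) (u w : H), 𝔥 (c • u) w = starRingEnd ℂ c * 𝔥 u w)
    (hadd₂ : ∀ u v w : H, 𝔥 u (v + w) = 𝔥 u v + 𝔥 u w)
    (hsmul₂ : ∀ (c : ℂ) (u w : H), 𝔥 u (c • w) = c * 𝔥 u w)
    (hherm : ∀ u v : H, u ∈ W → v ∈ W → 𝔥 u v = starRingEnd ℂ (𝔥 v u))
    (heig : ∀ (z : ℂ) (x : B.domain), B x = z • (x : H) → (x : H) ∈ W)
    (hsa : ∀ x y : B.domain, (x : H) ∈ W → B x ∈ W →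
      𝔥 (B x) ((y : H)) = 𝔥 ((x : H)) (B y))
    (hnd : ∀ u : H, u ∈ W → u ≠ 0 → ∃ v : H, 𝔥 u v ≠ 0) :
    ∀ lam : ℂ, ¬ Function.Bijective (fun x : B.domain => B x - lam • (x : H)) →
      ¬ Function.Bijective (fun x : B.domain => B x - (starRingEnd ℂ lam) • (x : H)) :=
  stmt_15_general H B hfred W 𝔥 hsmul₁ hadd₂ hsmul₂ heig hsa hnd
end
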